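/- arXiv:2206.06881 — 2 statements merged into one kernel-verified Lean document; each statement's English description precedes it below -/
import Mathlib

section
/- Let M be a connected matroid with at least two circuits. Then every element of the ground set 𝒞 of the combinatorial derived matroid δM is contained in a triangle, i.e. for every circuit C of M there exist circuits C', C'' of M such that {C, C', C''} is a circuit of δM of size 3. -/
/-!
Choose a circuit `D ≠ C` meeting `C` with `D \ C` inclusion-minimal (connectivity provides
candidates); then `C ∪ D` has nullity at most `2`. Eliminating a common element of `C` and `D`
gives a third circuit `C'' ⊆ C ∪ D`, so `{C, D, C''}` has support of nullity at most `2 < 3` and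
lies in `𝒜₀`. It is a circuit of `δM` because no member of `𝒜` has fewer than three elements:
one or two circuits have nullity at least their number, and neither `ε` nor `↑` decreases
cardinality.
-/

open Set

namespace DM

variable {α : Type*}

/-- A circuit of a matroid: an inclusion-minimal dependent set. -/
def IsCircuit (M : Matroid α) (C : Set α) : Prop :=
  M.Dep C ∧ ∀ D, M.Dep D → D ⊆ C → D = C

/-- The collection 𝒞 of circuits of `M`. -/
def circuits (M : Matroid α) : Set (Set α) := {C | IsCircuit M C}

/-- The rank of a set: the maximal cardinality of an independent subset. -/
noncomputable def rk (M : Matroid α) (S : Set α) : ℕ :=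
  sSup {m : ℕ | ∃ I, I ⊆ S ∧ M.Indep I ∧ I.ncard = m}

/-- The nullity function n(S) = |S| - r(S). -/
noncomputable def nullity (M : Matroid α) (S : Set α) : ℕ := S.ncard - rk M S

/-- The support of a family of sets. -/
def supp (A : Set (Set α)) : Set α := ⋃₀ A

/-- The initial collection 𝒜₀ = {A ⊆ 𝒞 : |A| > n(supp A)}. -/
noncomputable def A0 (M : Matroid α) : Set (Set (Set α)) :=
  {A | A ⊆ circuits M ∧ nullity M (supp A) < A.ncard}

/-- The operation ε. -/
def eps (X : Set (Set (Set α))) : Set (Set (Set α)) :=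
  X ∪ {B | ∃ A₁ ∈ X, ∃ A₂ ∈ X, A₁ ∩ A₂ ∉ X ∧ ∃ C ∈ A₁ ∩ A₂, B = (A₁ ∪ A₂) \ {C}}

/-- The up-closure ↑X = {A ⊆ 𝒞 : ∃ A' ∈ X, A' ⊆ A} within the ground collection 𝒞. -/
def up (𝒞 : Set (Set α)) (X : Set (Set (Set α))) : Set (Set (Set α)) :=
  {A | A ⊆ 𝒞 ∧ ∃ A' ∈ X, A' ⊆ A}

/-- The increasing sequence 𝒜ᵢ with 𝒜₍ᵢ₊₁₎ = ↑ε(𝒜ᵢ). -/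
noncomputable def Ai (M : Matroid α) : ℕ → Set (Set (Set α))
  | 0 => A0 M
  | (i+1) => up (circuits M) (eps (Ai M i))

/-- 𝒜 = ⋃ᵢ 𝒜ᵢ : the collection of dependent sets of the combinatorial derived matroid δM. -/
noncomputable def derivedDep (M : Matroid α) : Set (Set (Set α)) := ⋃ i, Ai M i

variable {M : Matroid α} {C D X I : Set α}

lemma isCircuit_iff : IsCircuit M C ↔ M.IsCircuit C :=
  Matroid.isCircuit_iff.symm

lemma rk_eq_ncard_of_isBasis' (hX : X.Finite) (hI : M.IsBasis' I X) : rk M X = I.ncard := by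
  refine IsGreatest.csSup_eq ⟨⟨I, hI.subset, hI.indep, rfl⟩, ?_⟩
  rintro _ ⟨J, hJX, hJ, rfl⟩
  have hJI : J.encard ≤ I.encard := hI.encard_eq_eRk ▸ hJ.encard_le_eRk_of_subset hJX
  rwa [← (hX.subset hJX).cast_ncard_eq, ← (hX.subset hI.subset).cast_ncard_eq,
    Nat.cast_le] at hJI

lemma nullity_eq_ncard_sdiff (hX : X.Finite) (hI : M.IsBasis' I X) :
    nullity M X = (X \ I).ncard := by
  rw [nullity, rk_eq_ncard_of_isBasis' hX hI, ncard_sdiff hI.subset (hX.subset hI.subset)]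

lemma one_le_nullity_of_dep (hX : X.Finite) (hXd : M.Dep X) : 1 ≤ nullity M X := by
  obtain ⟨I, hI⟩ := M.exists_isBasis' X
  rw [nullity_eq_ncard_sdiff hX hI, Nat.one_le_iff_ne_zero, Ne, ncard_eq_zero hX.sdiff,
    sdiff_eq_empty]
  exact fun hXI => hXd.not_indep (hI.indep.subset hXI)

lemma two_le_nullity_union {C₁ C₂ : Set α} (hU : (C₁ ∪ C₂).Finite) (h₁ : M.IsCircuit C₁)
    (h₂ : M.IsCircuit C₂) (hne : C₁ ≠ C₂) : 2 ≤ nullity M (C₁ ∪ C₂) := by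
  have : Nonempty α := h₁.nonempty.to_subtype.map Subtype.val
  obtain ⟨I, hI⟩ := M.exists_isBasis' (C₁ ∪ C₂)
  rw [nullity_eq_ncard_sdiff hU hI]
  by_contra! hlt
  obtain ⟨a, ha⟩ := (ncard_le_one_iff_subset_singleton (s := (C₁ ∪ C₂) \ I) hU.sdiff).mp (by omega)
  have hmem : ∀ C ⊆ C₁ ∪ C₂, M.IsCircuit C → a ∈ C := fun C hCU hC => by
    by_contra haC
    refine hC.not_indep (hI.indep.subset fun y hy => ?_)
    by_contra hyI
    exact haC (ha ⟨hCU hy, hyI⟩ ▸ hy)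
  obtain ⟨C, hCU, hC⟩ := h₁.elimination h₂ hne a
  exact (hCU (hmem C (hCU.trans sdiff_subset) hC)).2 rfl

lemma ncard_le_nullity_supp (hE : M.E.Finite) {A : Set (Set α)}
    (hA : ∀ C ∈ A, M.IsCircuit C) (hA₂ : A.ncard ≤ 2) : A.ncard ≤ nullity M (supp A) := by
  have hfin : ∀ {X}, X ⊆ M.E → X.Finite := fun hX => hE.subset hX
  interval_cases h : A.ncard
  · exact Nat.zero_le _
  · obtain ⟨C, rfl⟩ := ncard_eq_one.mp h
    have hC := hA C rfl
    rw [supp, sUnion_singleton]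
    exact one_le_nullity_of_dep (hfin hC.subset_ground) hC.dep
  · obtain ⟨C₁, C₂, hne, rfl⟩ := ncard_eq_two.mp h
    have h₁ := hA C₁ (.inl rfl)
    have h₂ := hA C₂ (.inr rfl)
    rw [supp, sUnion_pair]
    exact two_le_nullity_union (hfin (union_subset h₁.subset_ground h₂.subset_ground)) h₁ h₂ hne

lemma three_le_ncard_of_mem_A0 (hE : M.E.Finite) {A : Set (Set α)} (hA : A ∈ A0 M) :
    3 ≤ A.ncard := by
  by_contra! h
  have := ncard_le_nullity_supp hE (fun C hC => isCircuit_iff.mp (hA.1 hC)) (by omega)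
  exact hA.2.not_ge this

lemma le_encard_of_mem_eps {X : Set (Set (Set α))} {k : ℕ∞} (hX : ∀ A ∈ X, k ≤ A.encard)
    {B : Set (Set α)} (hB : B ∈ eps X) : k ≤ B.encard := by
  obtain hB | ⟨A₁, h₁, A₂, h₂, hA, C, hC, rfl⟩ := hB
  · exact hX B hB
  obtain ⟨b, hb₂, hb₁⟩ := not_subset.mp fun h => hA (by rwa [inter_eq_right.mpr h])
  calc k ≤ A₁.encard := hX A₁ h₁
    _ = (insert b (A₁ \ {C})).encard := by
      rw [encard_insert_of_notMem fun h => hb₁ h.1, encard_sdiff_singleton_add_one hC.1]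
    _ ≤ ((A₁ ∪ A₂) \ {C}).encard := by
      refine encard_le_encard
        (insert_subset ⟨.inr hb₂, ?_⟩ (sdiff_subset_sdiff_left subset_union_left))
      rintro rfl
      exact hb₁ hC.1

lemma le_encard_of_mem_up {𝒞 : Set (Set α)} {X : Set (Set (Set α))} {k : ℕ∞}
    (hX : ∀ A ∈ X, k ≤ A.encard) {B : Set (Set α)} (hB : B ∈ up 𝒞 X) : k ≤ B.encard :=
  let ⟨_, A, hA, hAB⟩ := hB
  (hX A hA).trans (encard_le_encard hAB)

lemma three_le_encard_of_mem_Ai (hE : M.E.Finite) :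
    ∀ i, ∀ A ∈ Ai M i, 3 ≤ A.encard
  | 0, A, hA => by
    have h3 := three_le_ncard_of_mem_A0 hE hA
    rw [← (finite_of_ncard_pos (by omega)).cast_ncard_eq]
    exact_mod_cast h3
  | i + 1, _, hA =>
    le_encard_of_mem_up (fun _ => le_encard_of_mem_eps (three_le_encard_of_mem_Ai hE i)) hA

lemma three_le_encard_of_mem_derivedDep (hE : M.E.Finite) {A : Set (Set α)}
    (hA : A ∈ derivedDep M) : 3 ≤ A.encard :=
  let ⟨i, hA⟩ := mem_iUnion.mp hA
  three_le_encard_of_mem_Ai hE i A hA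

lemma exists_mem_ground_notMem_of_isCircuit
    (htwo : ∃ C₁ C₂ : Set α, M.IsCircuit C₁ ∧ M.IsCircuit C₂ ∧ C₁ ≠ C₂) (hC : M.IsCircuit C) :
    ∃ f ∈ M.E, f ∉ C := by
  by_contra! hEC
  obtain ⟨C₁, C₂, h₁, h₂, hne⟩ := htwo
  exact hne ((h₁.eq_of_subset_isCircuit hC (h₁.subset_ground.trans hEC)).trans
    (h₂.eq_of_subset_isCircuit hC (h₂.subset_ground.trans hEC)).symm)

lemma exists_isCircuit_ne_inter_nonempty
    (hconn : ∀ x ∈ M.E, ∀ y ∈ M.E, x ≠ y → ∃ C, M.IsCircuit C ∧ x ∈ C ∧ y ∈ C)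
    (hC : M.IsCircuit C) {f : α} (hf : f ∈ M.E) (hfC : f ∉ C) :
    ∃ D, M.IsCircuit D ∧ D ≠ C ∧ (D ∩ C).Nonempty := by
  obtain ⟨e, he⟩ := hC.nonempty
  obtain ⟨D, hD, heD, hfD⟩ := hconn e (hC.subset_ground he) f hf (ne_of_mem_of_not_mem he hfC)
  exact ⟨D, hD, ne_of_mem_of_not_mem' hfD hfC, e, heD, he⟩

/-- For `x ∈ C ∩ D`, a basis of `C ∪ D` extending `C \ {x}` misses at most one element of `D \ C`:
the fundamental circuit of a second missed element would have a smaller difference with `C`. -/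
lemma nullity_union_le_two_of_minimalFor (hE : M.E.Finite) (hC : M.IsCircuit C)
    (hD : MinimalFor (fun D => M.IsCircuit D ∧ D ≠ C ∧ (D ∩ C).Nonempty) (· \ C) D) :
    nullity M (C ∪ D) ≤ 2 := by
  obtain ⟨⟨hDc, -, x, hxD, hxC⟩, hmin⟩ := hD
  have hUE : C ∪ D ⊆ M.E := union_subset hC.subset_ground hDc.subset_ground
  obtain ⟨J, hJ, hCJ⟩ := (hC.sdiff_singleton_indep hxC).subset_isBasis_of_subset
    (sdiff_subset.trans subset_union_left) hUE
  have hJD : J \ C ⊆ D := fun a ha => (hJ.subset ha.1).resolve_left ha.2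
  set W := (D \ C) \ J
  have hW : ∀ f ∈ W, ∀ g ∈ W, f = g := by
    intro f hf g hg
    by_contra hfg
    have hK := hJ.indep.fundCircuit_isCircuit (hJ.subset_closure (.inr hf.1.1)) hf.2
    have hKJ := M.fundCircuit_subset_insert f J
    have hKC : M.fundCircuit f J \ C ⊆ (D \ C) \ {g} := by
      rintro a ⟨haK, haC⟩
      obtain rfl | haJ := hKJ haK
      · exact ⟨hf.1, hfg⟩
      · exact ⟨⟨hJD ⟨haJ, haC⟩, haC⟩, fun hag => hg.2 (hag ▸ haJ)⟩
    have hKmeet : (M.fundCircuit f J ∩ C).Nonempty := by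
      by_contra hdisj
      have hKD : M.fundCircuit f J ⊆ D := fun a ha =>
        (hKC ⟨ha, fun haC => hdisj ⟨a, ha, haC⟩⟩).1.1
      exact hdisj ⟨x, hK.eq_of_subset_isCircuit hDc hKD ▸ hxD, hxC⟩
    have hKne : M.fundCircuit f J ≠ C :=
      ne_of_mem_of_not_mem' (M.mem_fundCircuit f J) hf.1.2
    have hDK := hmin ⟨hK, hKne, hKmeet⟩ (hKC.trans sdiff_subset)
    exact (hKC (hDK hg.1)).2 rfl
  have hUJ : (C ∪ D) \ J ⊆ insert x W := by
    rintro a ⟨haC | haD, haJ⟩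
    · exact .inl (by_contra fun hax => haJ (hCJ ⟨haC, hax⟩))
    · by_cases haC : a ∈ C
      · exact .inl (by_contra fun hax => haJ (hCJ ⟨haC, hax⟩))
      · exact .inr ⟨⟨haD, haC⟩, haJ⟩
  have hWfin : W.Finite := (hE.subset hDc.subset_ground).sdiff.sdiff
  calc nullity M (C ∪ D) = ((C ∪ D) \ J).ncard :=
        nullity_eq_ncard_sdiff (hE.subset hUE) hJ.isBasis'
    _ ≤ (insert x W).ncard := ncard_le_ncard hUJ (hWfin.insert x)
    _ ≤ W.ncard + 1 := ncard_insert_le x W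
    _ ≤ 2 := by have := (ncard_le_one hWfin).mpr hW; omega

lemma exists_isCircuit_nullity_union_le_two (hE : M.E.Finite)
    (hconn : ∀ x ∈ M.E, ∀ y ∈ M.E, x ≠ y → ∃ C, M.IsCircuit C ∧ x ∈ C ∧ y ∈ C)
    (htwo : ∃ C₁ C₂ : Set α, M.IsCircuit C₁ ∧ M.IsCircuit C₂ ∧ C₁ ≠ C₂) (hC : M.IsCircuit C) :
    ∃ D, M.IsCircuit D ∧ D ≠ C ∧ (D ∩ C).Nonempty ∧ nullity M (C ∪ D) ≤ 2 := by
  obtain ⟨f, hf, hfC⟩ := exists_mem_ground_notMem_of_isCircuit htwo hC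
  have hfin : {D | M.IsCircuit D ∧ D ≠ C ∧ (D ∩ C).Nonempty}.Finite :=
    hE.finite_subsets.subset fun D hD => hD.1.subset_ground
  obtain ⟨D, hD⟩ := hfin.exists_minimalFor (· \ C) _
    (exists_isCircuit_ne_inter_nonempty hconn hC hf hfC)
  exact ⟨D, hD.1.1, hD.1.2.1, hD.1.2.2, nullity_union_le_two_of_minimalFor hE hC hD⟩

lemma triple_mem_A0_of_subset_union {C₁ C₂ C₃ : Set α} (h₁ : M.IsCircuit C₁)
    (h₂ : M.IsCircuit C₂) (h₃ : M.IsCircuit C₃) (h₃U : C₃ ⊆ C₁ ∪ C₂)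
    (hnull : nullity M (C₁ ∪ C₂) ≤ 2) (hcard : ({C₁, C₂, C₃} : Set (Set α)).ncard = 3) :
    {C₁, C₂, C₃} ∈ A0 M := by
  refine ⟨?_, ?_⟩
  · rintro _ (rfl | rfl | rfl) <;> exact isCircuit_iff.mpr ‹_›
  · have hsupp : supp {C₁, C₂, C₃} = C₁ ∪ C₂ := by
      rw [supp, sUnion_insert, sUnion_pair, ← union_assoc, union_eq_left.mpr h₃U]
    rw [hsupp, hcard]
    omega

lemma minimal_mem_derivedDep_of_ncard_eq_three (hE : M.E.Finite) {T : Set (Set α)}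
    (hT : T ∈ derivedDep M) (hT₃ : T.ncard = 3) : Minimal (· ∈ derivedDep M) T := by
  have hTfin : T.Finite := finite_of_ncard_pos (by omega)
  refine ⟨hT, fun B hB hBT => (Finite.eq_of_subset_of_encard_le (hTfin.subset hBT) hBT ?_).ge⟩
  rw [← hTfin.cast_ncard_eq, hT₃]
  exact three_le_encard_of_mem_derivedDep hE hB

/-- in a connected matroid with at least two circuits, every element of
the ground set 𝒞 of δM lies in a triangle, i.e. a circuit of δM of size 3. -/
theorem derived_mem_triangle (M : Matroid α) (hE : M.E.Finite)
    (hconn : ∀ x ∈ M.E, ∀ y ∈ M.E, x ≠ y → ∃ C, IsCircuit M C ∧ x ∈ C ∧ y ∈ C)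
    (htwo : ∃ C₁ C₂ : Set α, IsCircuit M C₁ ∧ IsCircuit M C₂ ∧ C₁ ≠ C₂)
    (C : Set α) (hC : IsCircuit M C) :
    ∃ C' C'' : Set α, IsCircuit M C' ∧ IsCircuit M C'' ∧
      ({C, C', C''} : Set (Set α)).ncard = 3 ∧
      Minimal (· ∈ derivedDep M) ({C, C', C''} : Set (Set α)) := by
  simp only [isCircuit_iff] at hconn htwo hC ⊢
  obtain ⟨D, hD, hDC, ⟨x, hxD, hxC⟩, hnull⟩ :=
    exists_isCircuit_nullity_union_le_two hE hconn htwo hC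
  obtain ⟨C'', hC''U, hC''⟩ := hC.elimination hD hDC.symm x
  have hxC'' : x ∉ C'' := fun h => (hC''U h).2 rfl
  have hcard : ({C, D, C''} : Set (Set α)).ncard = 3 := ncard_eq_three.mpr
    ⟨C, D, C'', hDC.symm, ne_of_mem_of_not_mem' hxC hxC'', ne_of_mem_of_not_mem' hxD hxC'', rfl⟩
  have hA0 := triple_mem_A0_of_subset_union hC hD hC'' (hC''U.trans sdiff_subset) hnull hcard
  exact ⟨D, C'', hD, hC'', hcard,
    minimal_mem_derivedDep_of_ncard_eq_three hE (mem_iUnion.mpr ⟨0, hA0⟩) hcard⟩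

end DM
end

section
/- Let M be a nonempty connected matroid of rank k on an n-element ground set. Then the rank of the combinatorial derived matroid δM is at most n − k; equivalently, every subset of 𝒞 of cardinality n − k + 1 is dependent in δM. -/
/-! Nullity is monotone on finite sets, so the support of any family of circuits has nullity at
most n(E) = n - k. A family of more than n - k circuits therefore already lies in 𝒜₀. -/

open Set

namespace DM

variable {α : Type*}

variable {M : Matroid α}

/-- When `M.eRk S = ⊤` both sides are `0`: `sSup` of an unbounded set of naturals is `0`. -/
theorem rk_eq_toNat_eRk (M : Matroid α) (S : Set α) : rk M S = (M.eRk S).toNat := by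
  rcases eq_top_or_lt_top (M.eRk S) with htop | hfin
  · have hall : ∀ m : ℕ, ∃ I, I ⊆ S ∧ M.Indep I ∧ I.ncard = m := fun m ↦ by
      obtain ⟨I, hIS, hI, hcard⟩ := Matroid.le_eRk_iff.1 (htop ▸ le_top : (m : ℕ∞) ≤ M.eRk S)
      exact ⟨I, hIS, hI, by rw [ncard_def, hcard, ENat.toNat_natCast]⟩
    rw [htop, ENat.toNat_top, rk, Nat.sSup_of_not_bddAbove]
    rintro ⟨b, hb⟩
    exact b.not_succ_le_self (hb (hall (b + 1)))
  · obtain ⟨r, hr⟩ := ENat.ne_top_iff_exists.1 hfin.ne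
    rw [← hr, ENat.toNat_natCast, rk]
    refine IsGreatest.csSup_eq ⟨?_, ?_⟩
    · obtain ⟨I, hIS, hI, hcard⟩ := Matroid.le_eRk_iff.1 hr.le
      exact ⟨I, hIS, hI, by rw [ncard_def, hcard, ENat.toNat_natCast]⟩
    · rintro m ⟨I, hIS, hI, rfl⟩
      have hle : I.encard ≤ r := hr ▸ hI.encard_le_eRk_of_subset hIS
      have hIfin : I.Finite := finite_of_encard_le_coe hle
      rwa [← hIfin.cast_ncard_eq, Nat.cast_le] at hle

theorem nullity_le_nullity_of_subset {S T : Set α} (hST : S ⊆ T) (hT : T.Finite) :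
    nullity M S ≤ nullity M T := by
  have hS : S.Finite := hT.subset hST
  have hrk : M.eRk T ≤ M.eRk S + (T \ S).encard := by
    simpa [union_sdiff_cancel hST] using M.eRk_union_le_eRk_add_encard S (T \ S)
  obtain ⟨rS, hrS⟩ := ENat.ne_top_iff_exists.1 (M.isRkFinite_of_finite hS).eRk_lt_top.ne
  obtain ⟨rT, hrT⟩ := ENat.ne_top_iff_exists.1 (M.isRkFinite_of_finite hT).eRk_lt_top.ne
  rw [← hrS, ← hrT, ← hT.sdiff.cast_ncard_eq] at hrk
  have hcard : (T \ S).ncard + S.ncard = T.ncard := ncard_sdiff_add_ncard_of_subset hST hT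
  simp only [nullity, rk_eq_toNat_eRk, ← hrS, ← hrT, ENat.toNat_natCast]
  norm_cast at hrk
  omega

theorem supp_subset_ground {A : Set (Set α)} (hA : A ⊆ circuits M) : supp A ⊆ M.E :=
  sUnion_subset fun _ hC ↦ (hA hC).1.subset_ground

theorem A0_subset_derivedDep (M : Matroid α) : A0 M ⊆ derivedDep M :=
  fun _ hA ↦ mem_iUnion.2 ⟨0, hA⟩

theorem derived_rank_le_general (M : Matroid α) (hE : M.E.Finite)
    (n k : ℕ) (hn : M.E.ncard = n) (hk : rk M M.E = k)
    (A : Set (Set α)) (hA : A ⊆ circuits M) (hcard : n - k + 1 ≤ A.ncard) :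
    A ∈ derivedDep M := by
  refine A0_subset_derivedDep M ⟨hA, ?_⟩
  calc nullity M (supp A) ≤ nullity M M.E :=
        nullity_le_nullity_of_subset (supp_subset_ground hA) hE
    _ = n - k := by rw [nullity, hn, hk]
    _ < A.ncard := hcard

/-- for a nonempty connected matroid of rank k on n elements, the rank of
δM is at most n − k: every subset of 𝒞 of cardinality at least n − k + 1 is dependent. -/
theorem derived_rank_le (M : Matroid α) (hE : M.E.Finite) (hne : M.E.Nonempty)
    (hconn : ∀ x ∈ M.E, ∀ y ∈ M.E, x ≠ y → ∃ C, IsCircuit M C ∧ x ∈ C ∧ y ∈ C)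
    (n k : ℕ) (hn : M.E.ncard = n) (hk : rk M M.E = k)
    (A : Set (Set α)) (hA : A ⊆ circuits M) (hcard : n - k + 1 ≤ A.ncard) :
    A ∈ derivedDep M :=
  derived_rank_le_general M hE n k hn hk A hA hcard

end DM
end
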